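/- Relative consistency (minimal): for a set of formulas Γ containing no occurrence of → and no occurrence of ∀, Γ ⊢_NK ⊥ if and only if Γ ⊢_NM ⊥. -/

import Mathlib

/-- First-order terms: variables (de Bruijn style indices for bound variables
are merged with free variable indices) and function symbols with arguments. -/
inductive Term where
  | var : ℕ → Term
  | fn : ℕ → (ℕ → Term) → Term

/-- Lift (shift by one) all variables ≥ k. -/
def Term.lift (k : ℕ) : Term → Term
  | .var n => .var (if n < k then n else n + 1)
  | .fn f a => .fn f (fun i => (a i).lift k)

/-- Capture-avoiding substitution of the term `s` for variable `k` (de Bruijn). -/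
def Term.subst (k : ℕ) (s : Term) : Term → Term
  | .var n => if n < k then .var n else if n = k then s else .var (n - 1)
  | .fn f a => .fn f (fun i => Term.subst k s (a i))

/-- Free variables of a term. -/
def Term.fv : Term → Set ℕ
  | .var n => {n}
  | .fn _ a => ⋃ i, (a i).fv

/-- First-order formulas with primitive negation, de Bruijn binders. -/
inductive Formula where
  | pred : ℕ → (ℕ → Term) → Formula
  | bot : Formula
  | top : Formula
  | neg : Formula → Formula
  | conj : Formula → Formula → Formula
  | disj : Formula → Formula → Formula
  | impl : Formula → Formula → Formula
  | all : Formula → Formula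
  | ex : Formula → Formula

def Formula.lift (k : ℕ) : Formula → Formula
  | .pred r a => .pred r (fun i => (a i).lift k)
  | .bot => .bot
  | .top => .top
  | .neg A => .neg (A.lift k)
  | .conj A B => .conj (A.lift k) (B.lift k)
  | .disj A B => .disj (A.lift k) (B.lift k)
  | .impl A B => .impl (A.lift k) (B.lift k)
  | .all A => .all (A.lift (k + 1))
  | .ex A => .ex (A.lift (k + 1))

/-- Capture-avoiding substitution of term `s` for variable `k` in a formula. -/
def Formula.subst (k : ℕ) (s : Term) : Formula → Formula
  | .pred r a => .pred r (fun i => Term.subst k s (a i))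
  | .bot => .bot
  | .top => .top
  | .neg A => .neg (A.subst k s)
  | .conj A B => .conj (A.subst k s) (B.subst k s)
  | .disj A B => .disj (A.subst k s) (B.subst k s)
  | .impl A B => .impl (A.subst k s) (B.subst k s)
  | .all A => .all (A.subst (k + 1) (s.lift 0))
  | .ex A => .ex (A.subst (k + 1) (s.lift 0))

/-- Free variables of a formula. -/
def Formula.fv : Formula → Set ℕ
  | .pred _ a => ⋃ i, (a i).fv
  | .bot => ∅
  | .top => ∅
  | .neg A => A.fv
  | .conj A B => A.fv ∪ B.fv
  | .disj A B => A.fv ∪ B.fv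
  | .impl A B => A.fv ∪ B.fv
  | .all A => {n | n + 1 ∈ A.fv}
  | .ex A => {n | n + 1 ∈ A.fv}

/-- Object-level biconditional, as a defined connective. -/
def Formula.fIff (A B : Formula) : Formula := .conj (.impl A B) (.impl B A)

/-- `A` contains no occurrence of the universal quantifier ∀. -/
def Formula.forallFree : Formula → Prop
  | .pred _ _ => True
  | .bot => True
  | .top => True
  | .neg A => A.forallFree
  | .conj A B => A.forallFree ∧ B.forallFree
  | .disj A B => A.forallFree ∧ B.forallFree
  | .impl A B => A.forallFree ∧ B.forallFree
  | .all _ => False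
  | .ex A => A.forallFree

/-- `A` contains no occurrence of implication →. -/
def Formula.impFree : Formula → Prop
  | .pred _ _ => True
  | .bot => True
  | .top => True
  | .neg A => A.impFree
  | .conj A B => A.impFree ∧ B.impFree
  | .disj A B => A.impFree ∧ B.impFree
  | .impl _ _ => False
  | .all A => A.impFree
  | .ex A => A.impFree

/-- The minimal translation (·)^m. -/
def Formula.mtr : Formula → Formula
  | .pred r a => .pred r a
  | .bot => .bot
  | .top => .top
  | .neg A => .neg A.mtr
  | .conj A B => .conj A.mtr B.mtr
  | .disj A B => .disj A.mtr B.mtr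
  | .impl A B => .disj (.neg A.mtr) B.mtr
  | .all A => .neg (.ex (.neg A.mtr))
  | .ex A => .ex A.mtr

/-- The intuitionistic translation (·)^j. -/
def Formula.jtr : Formula → Formula
  | .pred r a => .pred r a
  | .bot => .bot
  | .top => .top
  | .neg A => .neg A.jtr
  | .conj A B => .conj A.jtr B.jtr
  | .disj A B => .disj A.jtr B.jtr
  | .impl A B => .impl A.jtr B.jtr
  | .all A => .neg (.ex (.neg A.jtr))
  | .ex A => .ex A.jtr

/-- Negative formulas: built from negated atoms, ⊥, ⊤ using only ¬, ∧, →, ∀. -/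
inductive Formula.Negative : Formula → Prop where
  | negAtom : ∀ r a, Formula.Negative (.neg (.pred r a))
  | bot : Formula.Negative .bot
  | top : Formula.Negative .top
  | neg : ∀ {A}, Formula.Negative A → Formula.Negative (.neg A)
  | conj : ∀ {A B}, Formula.Negative A → Formula.Negative B → Formula.Negative (.conj A B)
  | impl : ∀ {A B}, Formula.Negative A → Formula.Negative B → Formula.Negative (.impl A B)
  | all : ∀ {A}, Formula.Negative A → Formula.Negative (.all A)

/-- Natural deduction derivability; the flags `efq`, `raa` tell whether the
ex falso quodlibet and reductio ad absurdum rules are available.  `Deriv efq raa Γ A`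
means `A` is derivable with undischarged assumptions among `Γ`. -/
inductive Deriv (efq raa : Bool) : Set Formula → Formula → Prop where
  | hyp : ∀ {Γ A}, A ∈ Γ → Deriv efq raa Γ A
  | topI : ∀ {Γ}, Deriv efq raa Γ .top
  | negI : ∀ {Γ A}, Deriv efq raa (insert A Γ) .bot → Deriv efq raa Γ (.neg A)
  | negE : ∀ {Γ A}, Deriv efq raa Γ (.neg A) → Deriv efq raa Γ A → Deriv efq raa Γ .bot
  | conjI : ∀ {Γ A B}, Deriv efq raa Γ A → Deriv efq raa Γ B → Deriv efq raa Γ (.conj A B)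
  | conjE1 : ∀ {Γ A B}, Deriv efq raa Γ (.conj A B) → Deriv efq raa Γ A
  | conjE2 : ∀ {Γ A B}, Deriv efq raa Γ (.conj A B) → Deriv efq raa Γ B
  | disjI1 : ∀ {Γ A B}, Deriv efq raa Γ A → Deriv efq raa Γ (.disj A B)
  | disjI2 : ∀ {Γ A B}, Deriv efq raa Γ B → Deriv efq raa Γ (.disj A B)
  | disjE : ∀ {Γ A B C}, Deriv efq raa Γ (.disj A B) → Deriv efq raa (insert A Γ) C →
      Deriv efq raa (insert B Γ) C → Deriv efq raa Γ C
  | implI : ∀ {Γ A B}, Deriv efq raa (insert A Γ) B → Deriv efq raa Γ (.impl A B)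
  | implE : ∀ {Γ A B}, Deriv efq raa Γ (.impl A B) → Deriv efq raa Γ A → Deriv efq raa Γ B
  | allI : ∀ {Γ A}, Deriv efq raa (Formula.lift 0 '' Γ) A → Deriv efq raa Γ (.all A)
  | allE : ∀ {Γ A} (t : Term), Deriv efq raa Γ (.all A) → Deriv efq raa Γ (A.subst 0 t)
  | exI : ∀ {Γ A} (t : Term), Deriv efq raa Γ (A.subst 0 t) → Deriv efq raa Γ (.ex A)
  | exE : ∀ {Γ A C}, Deriv efq raa Γ (.ex A) →
      Deriv efq raa (insert A (Formula.lift 0 '' Γ)) (C.lift 0) → Deriv efq raa Γ C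
  | efqR : ∀ {Γ A}, efq = true → Deriv efq raa Γ .bot → Deriv efq raa Γ A
  | raaR : ∀ {Γ A}, raa = true → Deriv efq raa (insert (.neg A) Γ) .bot → Deriv efq raa Γ A

/-- Minimal natural deduction. -/
def NM : Set Formula → Formula → Prop := Deriv false false
/-- Intuitionistic natural deduction. -/
def NJ : Set Formula → Formula → Prop := Deriv true false
/-- Classical natural deduction (minimal + reductio ad absurdum). -/
def NK : Set Formula → Formula → Prop := Deriv false true

/-!
A derivation of `A` from `Γ`, classical or even with ex falso, becomes a minimal derivation of
`¬¬Aᵐ` from `Γᵐ`. Each rule is replayed under the double negation, which in minimal logic behaves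
like a monad whose algebras are the negations (`Deriv.dneg_bind`); the classical rules survive
because `¬¬(¬A ∨ A)` and `¬¬⊥ → ⊥` are minimally provable. A formula without `→` and `∀` is its
own translation, so a classical refutation of such a `Γ` yields a minimal one.
-/

namespace Formula

theorem mtr_lift (A : Formula) (k : ℕ) : (A.lift k).mtr = A.mtr.lift k := by
  induction A generalizing k <;> simp [Formula.lift, Formula.mtr, *]

theorem mtr_subst (A : Formula) (k : ℕ) (s : Term) : (A.subst k s).mtr = A.mtr.subst k s := by
  induction A generalizing k s <;> simp [Formula.subst, Formula.mtr, *]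

theorem mtr_eq_self {A : Formula} (h₁ : A.forallFree) (h₂ : A.impFree) : A.mtr = A := by
  induction A <;> simp_all [Formula.mtr, Formula.forallFree, Formula.impFree]

theorem mtr_image_lift_image (Γ : Set Formula) :
    mtr '' (lift 0 '' Γ) = lift 0 '' (mtr '' Γ) := by
  simp only [Set.image_image, mtr_lift]

end Formula

namespace Deriv

variable {e r : Bool} {Γ Δ : Set Formula} {A B C : Formula}

theorem weaken (h : Deriv e r Γ A) (hΓΔ : Γ ⊆ Δ) : Deriv e r Δ A := by
  induction h generalizing Δ with
  | hyp hA => exact hyp (hΓΔ hA)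
  | topI => exact topI
  | negI _ ih => exact negI (ih (Set.insert_subset_insert hΓΔ))
  | negE _ _ ih₁ ih₂ => exact negE (ih₁ hΓΔ) (ih₂ hΓΔ)
  | conjI _ _ ih₁ ih₂ => exact conjI (ih₁ hΓΔ) (ih₂ hΓΔ)
  | conjE1 _ ih => exact conjE1 (ih hΓΔ)
  | conjE2 _ ih => exact conjE2 (ih hΓΔ)
  | disjI1 _ ih => exact disjI1 (ih hΓΔ)
  | disjI2 _ ih => exact disjI2 (ih hΓΔ)
  | disjE _ _ _ ih ih₁ ih₂ =>
    exact disjE (ih hΓΔ) (ih₁ (Set.insert_subset_insert hΓΔ)) (ih₂ (Set.insert_subset_insert hΓΔ))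
  | implI _ ih => exact implI (ih (Set.insert_subset_insert hΓΔ))
  | implE _ _ ih₁ ih₂ => exact implE (ih₁ hΓΔ) (ih₂ hΓΔ)
  | allI _ ih => exact allI (ih (Set.image_mono hΓΔ))
  | allE t _ ih => exact allE t (ih hΓΔ)
  | exI t _ ih => exact exI t (ih hΓΔ)
  | exE _ _ ih ih₂ => exact exE (ih hΓΔ) (ih₂ (Set.insert_subset_insert (Set.image_mono hΓΔ)))
  | efqR he _ ih => exact efqR he (ih hΓΔ)
  | raaR hr _ ih => exact raaR hr (ih (Set.insert_subset_insert hΓΔ))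

theorem weaken_insert (h : Deriv e r Γ A) : Deriv e r (insert B Γ) A :=
  h.weaken (Set.subset_insert B Γ)

theorem mono_flags {e' r' : Bool} (he : e = true → e' = true) (hr : r = true → r' = true)
    (h : Deriv e r Γ A) : Deriv e' r' Γ A := by
  induction h with
  | hyp hA => exact hyp hA
  | topI => exact topI
  | negI _ ih => exact negI ih
  | negE _ _ ih₁ ih₂ => exact negE ih₁ ih₂
  | conjI _ _ ih₁ ih₂ => exact conjI ih₁ ih₂
  | conjE1 _ ih => exact conjE1 ih
  | conjE2 _ ih => exact conjE2 ih
  | disjI1 _ ih => exact disjI1 ih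
  | disjI2 _ ih => exact disjI2 ih
  | disjE _ _ _ ih ih₁ ih₂ => exact disjE ih ih₁ ih₂
  | implI _ ih => exact implI ih
  | implE _ _ ih₁ ih₂ => exact implE ih₁ ih₂
  | allI _ ih => exact allI ih
  | allE t _ ih => exact allE t ih
  | exI t _ ih => exact exI t ih
  | exE _ _ ih ih₂ => exact exE ih ih₂
  | efqR h₀ _ ih => exact efqR (he h₀) ih
  | raaR h₀ _ ih => exact raaR (hr h₀) ih

theorem hyp_insert : Deriv e r (insert A Γ) A :=
  hyp (Set.mem_insert A Γ)

theorem dneg_intro (h : Deriv e r Γ A) : Deriv e r Γ (.neg (.neg A)) :=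
  negI (negE hyp_insert h.weaken_insert)

theorem bot_of_dneg_bot (h : Deriv e r Γ (.neg (.neg .bot))) : Deriv e r Γ .bot :=
  negE h (negI hyp_insert)

theorem neg_of_bot (h : Deriv e r Γ .bot) : Deriv e r Γ (.neg A) :=
  negI h.weaken_insert

/-- In minimal logic `¬¬` is a monad, and the negations are its algebras. -/
theorem dneg_bind (hA : Deriv e r Γ (.neg (.neg A))) (hC : Deriv e r (insert A Γ) (.neg C)) :
    Deriv e r Γ (.neg C) :=
  negI <| negE hA.weaken_insert <| negI <|
    negE (hC.weaken (Set.insert_subset_insert (Set.subset_insert C Γ)))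
      (hyp (Set.mem_insert_of_mem A (Set.mem_insert C Γ)))

theorem dneg_em : Deriv e r Γ (.neg (.neg (.disj (.neg A) A))) :=
  negI <| negE hyp_insert <| disjI1 <| negI <|
    negE (hyp (Set.mem_insert_of_mem A (Set.mem_insert _ Γ))) (disjI2 hyp_insert)

theorem mtr_dneg (h : Deriv e r Γ A) :
    NM (Formula.mtr '' Γ) (.neg (.neg A.mtr)) := by
  induction h with
  | hyp hA => exact dneg_intro (hyp (Set.mem_image_of_mem _ hA))
  | topI => exact dneg_intro topI
  | negI _ ih =>
    rw [Set.image_insert_eq] at ih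
    exact dneg_intro (negI (bot_of_dneg_bot ih))
  | negE _ _ ih₁ ih₂ =>
    exact dneg_bind ih₂ (dneg_intro (negE ih₁.weaken_insert (dneg_intro hyp_insert)))
  | conjI _ _ ih₁ ih₂ =>
    exact dneg_bind ih₁ (dneg_bind ih₂.weaken_insert
      (dneg_intro (conjI (hyp (by simp)) hyp_insert)))
  | conjE1 _ ih => exact dneg_bind ih (dneg_intro (conjE1 hyp_insert))
  | conjE2 _ ih => exact dneg_bind ih (dneg_intro (conjE2 hyp_insert))
  | disjI1 _ ih => exact dneg_bind ih (dneg_intro (disjI1 hyp_insert))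
  | disjI2 _ ih => exact dneg_bind ih (dneg_intro (disjI2 hyp_insert))
  | disjE _ _ _ ih ih₁ ih₂ =>
    rw [Set.image_insert_eq] at ih₁ ih₂
    exact dneg_bind ih (disjE hyp_insert (ih₁.weaken (by grind)) (ih₂.weaken (by grind)))
  | implI _ ih =>
    rw [Set.image_insert_eq] at ih
    exact dneg_bind dneg_em (disjE hyp_insert (dneg_intro (disjI1 hyp_insert))
      (dneg_bind (ih.weaken (by grind)) (dneg_intro (disjI2 hyp_insert))))
  | implE _ _ ih₁ ih₂ =>
    exact dneg_bind ih₁ (disjE hyp_insert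
      (dneg_bind (ih₂.weaken (by grind)) (neg_of_bot (negE (hyp (by simp)) hyp_insert)))
      (dneg_intro hyp_insert))
  | allI _ ih =>
    rw [Formula.mtr_image_lift_image] at ih
    exact dneg_intro (negI (exE hyp_insert (negE (ih.weaken (by grind)) hyp_insert)))
  | @allE _ A t _ ih =>
    rw [Formula.mtr_subst]
    exact dneg_bind ih (negI (negE (A := .ex (.neg A.mtr)) (hyp (by simp [Formula.mtr]))
      (exI t hyp_insert)))
  | exI t _ ih =>
    rw [Formula.mtr_subst] at ih
    exact dneg_bind ih (dneg_intro (exI t hyp_insert))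
  | exE _ _ ih ih₂ =>
    rw [Set.image_insert_eq, Formula.mtr_image_lift_image, Formula.mtr_lift] at ih₂
    exact dneg_bind ih (exE hyp_insert (ih₂.weaken (by grind)))
  | efqR _ _ ih => exact neg_of_bot (bot_of_dneg_bot ih)
  | raaR _ _ ih =>
    rw [Set.image_insert_eq] at ih
    exact negI (bot_of_dneg_bot ih)

end Deriv

/-- Relative consistency, minimal version. -/
theorem relative_consistency_minimal (Γ : Set Formula)
    (hΓ : ∀ B ∈ Γ, B.forallFree ∧ B.impFree) :
    NK Γ .bot ↔ NM Γ .bot := by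
  have hfix : Formula.mtr '' Γ = Γ :=
    (Set.image_congr fun B hB => Formula.mtr_eq_self (hΓ B hB).1 (hΓ B hB).2).trans
      (Set.image_id' Γ)
  refine ⟨fun h => ?_, Deriv.mono_flags id (fun _ => rfl)⟩
  have h' := h.mtr_dneg
  rw [hfix] at h'
  exact Deriv.bot_of_dneg_bot h'
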